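/- Let L be a multiplicative abelian group, g = (g_1,…,g_n) a local monodromy vector of rank r on L, and β a convoluter, and let γ := c*β* be the inverse convoluter with γ^{H_i} = (β^{V_i})^{−1}, γ^{V_i} = (β^{H_i})^{−1}, γ^{U_i} = (β^{U_i})^{−1}, γ^T = (β^T)^{−1}. Assume β^T ≠ 1, and that for every i and every α in the support of g_i one has α·β^{H_i}·β^T ≠ 1. Then the defect of the inverse pair is the negative of the original defect: δ(c*β*, κ(β,g)) = −δ(β,g). Consequently the rank of κ(c*β*, κ(β,g)) equals r. -/

import Mathlib

open Finset

/-- The degree of a divisor (a finitely supported `ℤ`-valued function) on an abelian group. -/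
noncomputable def divDeg {L : Type*} [CommGroup L] (g : L →₀ ℤ) : ℤ :=
  g.sum fun _ m => m

/-- A convoluter for `n` points: elements `β^{H_i}, β^{V_i}, β^{U_i}, β^T` of `L`
subject to the relations coming from the diagonal configuration. -/
structure Convoluter (L : Type*) [CommGroup L] (n : ℕ) where
  H : Fin n → L
  V : Fin n → L
  U : Fin n → L
  T : L
  relH : T * ∏ i, H i = 1
  relV : T * ∏ i, V i = 1
  relU : ∀ i, U i = H i * V i * T

/-- The defect `δ(β,g) = (n-2)r - Σ_i m_i((β^{H_i})⁻¹)`. -/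
noncomputable def defect {L : Type*} [CommGroup L] {n : ℕ} (β : Convoluter L n)
    (g : Fin n → (L →₀ ℤ)) (r : ℤ) : ℤ :=
  ((n : ℤ) - 2) * r - ∑ i, g i (β.H i)⁻¹

/-- The local Katz transformation
`κ_i(β,g) = (m_i((β^{H_i})⁻¹) + δ)·[β^{V_i}] - m_i((β^{H_i})⁻¹)·[β^{V_i}β^T] + Σ_α m_i(α)·[αβ^{U_i}]`. -/
noncomputable def katz {L : Type*} [CommGroup L] {n : ℕ} (β : Convoluter L n)
    (g : Fin n → (L →₀ ℤ)) (r : ℤ) (i : Fin n) : L →₀ ℤ :=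
  Finsupp.single (β.V i) (g i (β.H i)⁻¹ + defect β g r)
    - Finsupp.single (β.V i * β.T) (g i (β.H i)⁻¹)
    + Finsupp.mapDomain (fun α => α * β.U i) (g i)

/-- The inverse convoluter `c*β*`, with `(c*β*)^{H_i} = (β^{V_i})⁻¹`,
`(c*β*)^{V_i} = (β^{H_i})⁻¹`, `(c*β*)^{U_i} = (β^{U_i})⁻¹`, `(c*β*)^T = (β^T)⁻¹`. -/
def Convoluter.star {L : Type*} [CommGroup L] {n : ℕ} (β : Convoluter L n) :
    Convoluter L n where
  H i := (β.V i)⁻¹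
  V i := (β.H i)⁻¹
  U i := (β.U i)⁻¹
  T := (β.T)⁻¹
  relH := by
    have h : (β.T * ∏ i, β.V i)⁻¹ = 1 := by rw [β.relV, inv_one]
    simpa [mul_inv, Finset.prod_inv_distrib, mul_comm] using h
  relV := by
    have h : (β.T * ∏ i, β.H i)⁻¹ = 1 := by rw [β.relH, inv_one]
    simpa [mul_inv, Finset.prod_inv_distrib, mul_comm] using h
  relU i := by
    show (β.U i)⁻¹ = (β.V i)⁻¹ * (β.H i)⁻¹ * β.T⁻¹
    rw [β.relU i, mul_inv, mul_inv, mul_comm (β.H i)⁻¹ (β.V i)⁻¹]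

/-! The new defect only reads the coefficient of `κ_i(β,g)` at `((c*β*)^{H_i})⁻¹ = β^{V_i}`.
Since `β^T ≠ 1`, the term `[β^{V_i}β^T]` does not contribute there, and since
`αβ^{U_i} = β^{V_i}` iff `αβ^{H_i}β^T = 1`, neither does the shifted divisor. So that coefficient
is `m_i((β^{H_i})⁻¹) + δ`, and summing over `i` gives `-δ`. Every `κ_i` shifts the degree by the
defect, so the rank of the double transform is `r + δ - δ = r`. -/

section

variable {L : Type*} [CommGroup L] {n : ℕ}

theorem divDeg_eq_degree (f : L →₀ ℤ) : divDeg f = f.degree := rfl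

theorem divDeg_katz (β : Convoluter L n) (g : Fin n → (L →₀ ℤ)) (r : ℤ) (i : Fin n) :
    divDeg (katz β g r i) = divDeg (g i) + defect β g r := by
  simp only [divDeg_eq_degree, katz, map_add, map_sub, Finsupp.degree_single,
    Finsupp.degree_mapDomain]
  ring

theorem Convoluter.star_H_inv (β : Convoluter L n) (i : Fin n) : (β.star.H i)⁻¹ = β.V i :=
  inv_inv _

theorem katz_apply_V (β : Convoluter L n) (g : Fin n → (L →₀ ℤ)) (r : ℤ) (i : Fin n)
    (hT : β.T ≠ 1) (h0 : g i (β.H i * β.T)⁻¹ = 0) :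
    katz β g r i (β.V i) = g i (β.H i)⁻¹ + defect β g r := by
  have hV : β.V i = (β.H i * β.T)⁻¹ * β.U i := by
    rw [β.relU i, mul_right_comm, inv_mul_cancel_left]
  have hsingle : Finsupp.single (β.V i * β.T) (g i (β.H i)⁻¹) (β.V i) = 0 :=
    Finsupp.single_eq_of_ne' (by simpa using hT)
  have hshift : Finsupp.mapDomain (· * β.U i) (g i) (β.V i) = 0 := by
    rw [hV, Finsupp.mapDomain_apply (mul_left_injective _), h0]
  rw [katz, Finsupp.add_apply, Finsupp.sub_apply, Finsupp.single_eq_same, hsingle, hshift]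
  ring

theorem defect_star_katz (β : Convoluter L n) (g : Fin n → (L →₀ ℤ)) (r : ℤ)
    (hT : β.T ≠ 1) (h0 : ∀ i, g i (β.H i * β.T)⁻¹ = 0) :
    defect β.star (katz β g r) (r + defect β g r) = -defect β g r := by
  have hcoeff : ∀ i, katz β g r i (β.star.H i)⁻¹ = g i (β.H i)⁻¹ + defect β g r := fun i => by
    rw [Convoluter.star_H_inv, katz_apply_V β g r i hT (h0 i)]
  simp only [defect, hcoeff, Finset.sum_add_distrib, Finset.sum_const, Finset.card_univ,
    Fintype.card_fin, nsmul_eq_mul]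
  ring

end

/-- The defect of the inverse pair is the negative of the original defect:
`δ(c*β*, κ(β,g)) = -δ(β,g)`; consequently the rank of `κ(c*β*, κ(β,g))` equals `r`. -/
theorem katz_inverse_defect {L : Type*} [CommGroup L] {n : ℕ} (r : ℤ)
    (g : Fin n → (L →₀ ℤ)) (hg : ∀ i, divDeg (g i) = r) (β : Convoluter L n)
    (hβT : β.T ≠ 1)
    (hβconv : ∀ i, ∀ α ∈ (g i).support, α * β.H i * β.T ≠ 1) :
    defect β.star (katz β g r) (r + defect β g r) = - defect β g r ∧
    ∀ i, divDeg (katz β.star (katz β g r) (r + defect β g r) i) = r := by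
  have h0 : ∀ i, g i (β.H i * β.T)⁻¹ = 0 := fun i =>
    Finsupp.notMem_support_iff.mp fun hα => hβconv i _ hα (by group)
  have hdefect := defect_star_katz β g r hβT h0
  refine ⟨hdefect, fun i => ?_⟩
  rw [divDeg_katz, hdefect, divDeg_katz, hg i]
  ring
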